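/- arXiv:2404.01853 — 2 statements merged into one kernel-verified Lean document; each statement's English description precedes it below -/
import Mathlib

section
/- Let k ≥ 2 and 0 ≤ r < 1, and let T ∈ ℝ^{k×k} be the uniform noise transition matrix with T_{ii} = 1 − r + r/k and T_{ij} = r/k for j ≠ i. Suppose the softmax output of the classifier on a sample with clean class c is the row vector (T_{c1}, ..., T_{ck}). Then for any observed label ỹ and any class c ≠ ỹ, JSD((T_{ỹ1},...,T_{ỹk}), δ_ỹ) < JSD((T_{c1},...,T_{ck}), δ_ỹ); that is, under uniform noise of any rate below 1, clean samples have strictly smaller JSD to the observed label than noisy samples. -/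
open Finset

/-- Jensen-Shannon divergence between two probability vectors on `Fin k`.
Terms with `P j = 0` (resp. `Q j = 0`) vanish since they are multiplied by `0`. -/
noncomputable def JSD {k : ℕ} (P Q : Fin k → ℝ) : ℝ :=
  (1 / 2) * ∑ j, P j * Real.log (P j / ((P j + Q j) / 2)) +
  (1 / 2) * ∑ j, Q j * Real.log (Q j / ((P j + Q j) / 2))

/-- The one-hot probability vector at class `y`. -/
def oneHot {k : ℕ} (y : Fin k) : Fin k → ℝ := fun j => if j = y then 1 else 0

/-!
Against a one-hot target `δ_y`, the Jensen-Shannon divergence of a probability vector `P`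
depends only on `p = P y`: it equals `log 2 - ((p + 1) log (p + 1) - p log p) / 2`.
The map `p ↦ (p + 1) log (p + 1) - p log p` has derivative `log (p + 1) - log p > 0`, so the
divergence strictly decreases in `p`. Under uniform noise the clean row puts mass
`1 - r + r / k` on the observed label and a noisy row only `r / k`, which is smaller when `r < 1`.
-/

open Real

lemma strictMonoOn_add_one_mul_log_sub_mul_log :
    StrictMonoOn (fun x : ℝ => (x + 1) * log (x + 1) - x * log x) (Set.Ici 0) := by
  refine strictMonoOn_of_deriv_pos (convex_Ici 0) (by fun_prop) fun x hx => ?_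
  rw [interior_Ici, Set.mem_Ioi] at hx
  have hderiv : HasDerivAt (fun x : ℝ => (x + 1) * log (x + 1) - x * log x)
      ((log (x + 1) + 1) * 1 - (log x + 1)) x := by
    have hshift := (hasDerivAt_mul_log (by positivity : x + 1 ≠ 0)).comp x
      ((hasDerivAt_id x).add_const 1)
    exact hshift.sub (hasDerivAt_mul_log hx.ne')
  rw [hderiv.deriv]
  linarith [log_lt_log hx (lt_add_one x)]

lemma JSD_oneHot {k : ℕ} (P : Fin k → ℝ) (y : Fin k) (hy : 0 ≤ P y) (hP : ∑ j, P j = 1) :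
    JSD P (oneHot y) = log 2 - ((P y + 1) * log (P y + 1) - P y * log (P y)) / 2 := by
  have hy1 : P y + 1 ≠ 0 := by positivity
  have hterm : ∀ j, P j * log (P j / ((P j + oneHot y j) / 2)) =
      P j * log 2 + if j = y then P y * log (P y) - P y * log (P y + 1) else 0 := by
    intro j
    by_cases hj : j = y
    · subst hj
      rcases hy.eq_or_lt with h0 | h0
      · simp [oneHot, ← h0]
      · simp only [oneHot, if_true]
        rw [log_div h0.ne' (by positivity), log_div hy1 two_ne_zero]
        ring
    · rcases eq_or_ne (P j) 0 with h0 | h0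
      · simp [h0, hj]
      · simp [oneHot, hj, div_div_cancel₀ h0]
  have honeHot : ∑ j, oneHot y j * log (oneHot y j / ((P j + oneHot y j) / 2)) =
      log 2 - log (P y + 1) := by
    rw [sum_eq_single y (fun j _ hj => by simp [oneHot, hj]) (by simp)]
    simp [oneHot, log_div two_ne_zero hy1]
  rw [JSD, sum_congr rfl fun j _ => hterm j, honeHot, sum_add_distrib, ← sum_mul, hP,
    sum_ite_eq' univ y, if_pos (mem_univ y)]
  ring

lemma sum_uniformNoise_row {k : ℕ} (i : Fin k) (r : ℝ) :
    ∑ j : Fin k, (if j = i then 1 - r + r / k else r / k) = 1 := by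
  have hk : (k : ℝ) ≠ 0 := Nat.cast_ne_zero.mpr (Fin.pos i).ne'
  have hsplit : ∀ j : Fin k,
      (if j = i then 1 - r + r / k else r / k) = r / k + if j = i then 1 - r else 0 := by
    intro j
    split_ifs <;> ring
  simp only [hsplit, sum_add_distrib, sum_const, card_univ, Fintype.card_fin, nsmul_eq_mul,
    sum_ite_eq', mem_univ, if_true]
  field_simp
  ring

theorem jsd_clean_lt_noisy_uniform_noise_general
    (k : ℕ) (r : ℝ) (hr0 : 0 ≤ r) (hr1 : r < 1)
    (T : Fin k → Fin k → ℝ)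
    (hT : ∀ i j : Fin k, T i j = if j = i then 1 - r + r / k else r / k)
    (ytil c : Fin k) (hc : c ≠ ytil) :
    JSD (T ytil) (oneHot ytil) < JSD (T c) (oneHot ytil) := by
  have hrow : ∀ i, ∑ j, T i j = 1 := fun i => by
    simpa only [hT] using sum_uniformNoise_row i r
  have hclean : T ytil ytil = 1 - r + r / k := by simp [hT]
  have hnoisy : T c ytil = r / k := by simp [hT, hc.symm]
  have hnoisy_nonneg : 0 ≤ r / k := by positivity
  have hnoisy_lt_clean : r / k < 1 - r + r / k := by linarith
  have hclean_nonneg : 0 ≤ 1 - r + r / k := hnoisy_nonneg.trans hnoisy_lt_clean.le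
  rw [JSD_oneHot _ ytil (hclean ▸ hclean_nonneg) (hrow ytil),
    JSD_oneHot _ ytil (hnoisy ▸ hnoisy_nonneg) (hrow c), hclean, hnoisy]
  have := strictMonoOn_add_one_mul_log_sub_mul_log hnoisy_nonneg hclean_nonneg hnoisy_lt_clean
  linarith

/-- Under uniform (symmetric) noise of any rate `r < 1`, if the softmax output on a sample
with clean class `c` is the row `T c` of the uniform noise transition matrix, then for any
observed label `ytil` and any class `c ≠ ytil`, clean samples have strictly smaller JSD to
the observed label than noisy samples. -/
theorem jsd_clean_lt_noisy_uniform_noise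
    (k : ℕ) (hk : 2 ≤ k) (r : ℝ) (hr0 : 0 ≤ r) (hr1 : r < 1)
    (T : Fin k → Fin k → ℝ)
    (hT : ∀ i j : Fin k, T i j = if j = i then 1 - r + r / k else r / k)
    (ytil c : Fin k) (hc : c ≠ ytil) :
    JSD (T ytil) (oneHot ytil) < JSD (T c) (oneHot ytil) :=
  jsd_clean_lt_noisy_uniform_noise_general k r hr0 hr1 T hT ytil c hc
end

section
/- Let k ≥ 2, 0 ≤ r < 1/2, let σ be a fixed-point-free permutation of {1,...,k}, and let T ∈ ℝ^{k×k} be the pair-flip noise transition matrix with T_{ii} = 1 − r, T_{i,σ(i)} = r, and T_{ij} = 0 otherwise. Suppose the softmax output of the classifier on a sample with clean class c is the row vector (T_{c1}, ..., T_{ck}). Then for any observed label ỹ and any class c ≠ ỹ, JSD((T_{ỹ1},...,T_{ỹk}), δ_ỹ) < JSD((T_{c1},...,T_{ck}), δ_ỹ); that is, under pairwise noise of rate below 0.5, clean samples have strictly smaller JSD to the observed label than noisy samples. -/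
/-!
Against a one-hot target `δ_y`, the JSD of a probability vector `P` depends only on the mass
`q = P y` it puts on `y`: it equals `log 2 + (q log q - (1 + q) log (1 + q)) / 2`, and this is
strictly decreasing in `q ≥ 0`. A row of the pair-flip matrix puts mass `1 - r` on its own class
and at most `r < 1 - r` on any other class, so the clean row is strictly closer to `δ_y`.
-/

open Finset

open Real

lemma mul_log_div_half_self (x : ℝ) : x * log (x / (x / 2)) = x * log 2 := by
  rcases eq_or_ne x 0 with rfl | hx
  · simp
  · rw [div_div_eq_mul_div, mul_div_cancel_left₀ _ hx]

lemma mul_log_div_add_one_div_two {q : ℝ} (hq : 0 ≤ q) :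
    q * log (q / ((q + 1) / 2)) = q * log q + q * log 2 - q * log (q + 1) := by
  rcases hq.eq_or_lt with rfl | hq
  · simp
  · rw [div_div_eq_mul_div, log_div (by positivity) (by positivity),
      log_mul hq.ne' two_ne_zero]
    ring

lemma strictAntiOn_mul_log_sub_one_add_mul_log :
    StrictAntiOn (fun q : ℝ => q * log q - (1 + q) * log (1 + q)) (Set.Ici 0) := by
  apply strictAntiOn_of_deriv_neg (convex_Ici 0)
  · exact (continuous_mul_log.sub
      (continuous_mul_log.comp (continuous_const.add continuous_id))).continuousOn
  · intro q hq
    rw [interior_Ici, Set.mem_Ioi] at hq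
    have hshift : HasDerivAt (fun q : ℝ => (1 + q) * log (1 + q)) (log (1 + q) + 1) q := by
      simpa [Function.comp_def] using
        (hasDerivAt_mul_log (by positivity : 1 + q ≠ 0)).comp q ((hasDerivAt_id q).const_add 1)
    rw [((hasDerivAt_mul_log hq.ne').fun_sub hshift).deriv]
    linarith [log_lt_log hq (lt_one_add q)]

lemma JSD_oneHot_eq {k : ℕ} {P : Fin k → ℝ} (hP : ∑ j, P j = 1) {y : Fin k} (hy : 0 ≤ P y) :
    JSD P (oneHot y) = log 2 + (1 / 2) * (P y * log (P y) - (1 + P y) * log (1 + P y)) := by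
  have hoff : ∀ j ∈ ({y}ᶜ : Finset (Fin k)),
      P j * log (P j / ((P j + oneHot y j) / 2)) = P j * log 2 := fun j hj => by
    rw [oneHot, if_neg (by simpa using hj), add_zero, mul_log_div_half_self]
  have hmass : ∑ j ∈ ({y}ᶜ : Finset (Fin k)), P j = 1 - P y := by
    rw [← hP, Fintype.sum_eq_add_sum_compl y P]
    ring
  have hfirst : ∑ j, P j * log (P j / ((P j + oneHot y j) / 2))
      = log 2 + P y * log (P y) - P y * log (P y + 1) := by
    rw [Fintype.sum_eq_add_sum_compl y, sum_congr rfl hoff, ← sum_mul, hmass, oneHot, if_pos rfl,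
      mul_log_div_add_one_div_two hy]
    ring
  have hsecond : ∑ j, oneHot y j * log (oneHot y j / ((P j + oneHot y j) / 2))
      = log 2 - log (P y + 1) := by
    rw [Fintype.sum_eq_single y (fun j hj => by simp [oneHot, hj]), oneHot, if_pos rfl, one_mul,
      one_div_div, log_div two_ne_zero (by positivity)]
  rw [JSD, hfirst, hsecond, add_comm 1 (P y)]
  ring

lemma JSD_oneHot_lt_of_lt {k : ℕ} {P Q : Fin k → ℝ} (hP : ∑ j, P j = 1) (hQ : ∑ j, Q j = 1)
    {y : Fin k} (hQy : 0 ≤ Q y) (hlt : Q y < P y) :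
    JSD P (oneHot y) < JSD Q (oneHot y) := by
  rw [JSD_oneHot_eq hP (hQy.trans hlt.le), JSD_oneHot_eq hQ hQy]
  have := strictAntiOn_mul_log_sub_one_add_mul_log (Set.mem_Ici.2 hQy)
    (Set.mem_Ici.2 (hQy.trans hlt.le)) hlt
  simp only at this
  linarith

section PairFlip

variable {α : Type*} [DecidableEq α]

def pairFlipMatrix (r : ℝ) (σ : Equiv.Perm α) : Matrix α α ℝ :=
  fun i j => if j = i then 1 - r else if j = σ i then r else 0

variable {r : ℝ} {σ : Equiv.Perm α}

lemma pairFlipMatrix_apply_self (i : α) : pairFlipMatrix r σ i i = 1 - r := if_pos rfl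

lemma pairFlipMatrix_apply_of_ne {i j : α} (hij : j ≠ i) :
    pairFlipMatrix r σ i j = if j = σ i then r else 0 := if_neg hij

lemma pairFlipMatrix_nonneg_of_ne (hr : 0 ≤ r) {i j : α} (hij : j ≠ i) :
    0 ≤ pairFlipMatrix r σ i j := by
  rw [pairFlipMatrix_apply_of_ne hij]
  split_ifs <;> simp [hr]

lemma pairFlipMatrix_le_of_ne (hr : 0 ≤ r) {i j : α} (hij : j ≠ i) :
    pairFlipMatrix r σ i j ≤ r := by
  rw [pairFlipMatrix_apply_of_ne hij]
  split_ifs <;> simp [hr]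

lemma sum_pairFlipMatrix_row [Fintype α] {i : α} (hσ : σ i ≠ i) :
    ∑ j, pairFlipMatrix r σ i j = 1 := by
  rw [Fintype.sum_eq_add i (σ i) hσ.symm
      (fun j hj => by rw [pairFlipMatrix_apply_of_ne hj.1, if_neg hj.2]),
    pairFlipMatrix_apply_self, pairFlipMatrix_apply_of_ne hσ, if_pos rfl]
  ring

end PairFlip

theorem jsd_clean_lt_noisy_pairflip_noise_general
    (k : ℕ) (r : ℝ) (hr0 : 0 ≤ r) (hr1 : r < 1 / 2)
    (σ : Equiv.Perm (Fin k)) (hσ : ∀ i, σ i ≠ i)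
    (T : Fin k → Fin k → ℝ)
    (hT : ∀ i j : Fin k, T i j = if j = i then 1 - r else if j = σ i then r else 0)
    (ytil c : Fin k) (hc : c ≠ ytil) :
    JSD (T ytil) (oneHot ytil) < JSD (T c) (oneHot ytil) := by
  obtain rfl : T = pairFlipMatrix r σ := funext fun i => funext (hT i)
  refine JSD_oneHot_lt_of_lt (sum_pairFlipMatrix_row (hσ ytil)) (sum_pairFlipMatrix_row (hσ c))
    (pairFlipMatrix_nonneg_of_ne hr0 hc.symm) ?_
  calc pairFlipMatrix r σ c ytil ≤ r := pairFlipMatrix_le_of_ne hr0 hc.symm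
    _ < 1 - r := by linarith
    _ = pairFlipMatrix r σ ytil ytil := (pairFlipMatrix_apply_self ytil).symm

/-- Under pairwise (pair-flip) noise of rate `r < 1/2` given by a fixed-point-free
permutation `σ`, if the softmax output on a sample with clean class `c` is the row `T c`
of the pair-flip noise transition matrix, then for any observed label `ytil` and any class
`c ≠ ytil`, clean samples have strictly smaller JSD to the observed label than noisy
samples. -/
theorem jsd_clean_lt_noisy_pairflip_noise
    (k : ℕ) (hk : 2 ≤ k) (r : ℝ) (hr0 : 0 ≤ r) (hr1 : r < 1 / 2)
    (σ : Equiv.Perm (Fin k)) (hσ : ∀ i, σ i ≠ i)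
    (T : Fin k → Fin k → ℝ)
    (hT : ∀ i j : Fin k, T i j = if j = i then 1 - r else if j = σ i then r else 0)
    (ytil c : Fin k) (hc : c ≠ ytil) :
    JSD (T ytil) (oneHot ytil) < JSD (T c) (oneHot ytil) :=
  jsd_clean_lt_noisy_pairflip_noise_general k r hr0 hr1 σ hσ T hT ytil c hc
end
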